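/- Let ρ > 1, α ∈ (0,1), H a complex Hilbert space, x ∈ H, F: ℓ_{2,ρ}(ℤ;H) → ℓ_{2,ρ}(ℤ;H), and u ∈ ℓ_{2,ρ}(ℤ;H) with spt u ⊆ ℕ and spt F(u) ⊆ ℕ. Then τ(1-τ^{-1})^α u = F(u) + δ_{-1} x holds if and only if u_0 = x and for all n ∈ ℕ, u_{n+1} = (-1)^{n+1} C(-α, n+1) u_0 + ∑_{k=0}^n (-1)^{n-k} C(-α, n-k) F(u)_k. -/

import Mathlib

/-- The generalized binomial coefficient `C(α, n) = α(α-1)⋯(α-n+1)/n!`. -/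
noncomputable def gbc (α : ℂ) (n : ℕ) : ℂ :=
  (descPochhammer ℂ n).eval α / n.factorial

/-- The operator `(1 - τ⁻¹)^α`: convolution with the kernel `((-1)^k C(α,k))_{k ≥ 0}`. -/
noncomputable def fracPow (H : Type*) [NormedAddCommGroup H] [Module ℂ H]
    (α : ℂ) (u : ℤ → H) : ℤ → H :=
  fun n => ∑' k : ℕ, ((-1 : ℂ) ^ k * gbc α k) • u (n - k)

open Polynomial Finset

section Helpers

lemma smeval_int' (p : ℤ[X]) (α : ℂ) : p.smeval α = (p.map (Int.castRingHom ℂ)).eval α := by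
  induction p using Polynomial.induction_on' with
  | add p q hp hq => simp [Polynomial.smeval_add, hp, hq]
  | monomial n a => simp [Polynomial.smeval_monomial, Polynomial.map_monomial, zsmul_eq_mul]

lemma gbc_eq_choose (α : ℂ) (n : ℕ) : gbc α n = Ring.choose α n := by
  have h := Ring.descPochhammer_eq_factorial_smul_choose (R := ℂ) α n
  rw [smeval_int', descPochhammer_map] at h
  rw [gbc, h, nsmul_eq_mul, mul_comm, mul_div_assoc,
    div_self (by exact_mod_cast n.factorial_ne_zero), mul_one]

@[simp] lemma gbc_zero (α : ℂ) : gbc α 0 = 1 := by simp [gbc]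

lemma conv_gbc (α : ℂ) (m : ℕ) :
    ∑ k ∈ Finset.range (m+1), gbc α k * gbc (-α) (m-k) = if m = 0 then 1 else 0 := by
  have h := Ring.add_choose_eq (r := α) (s := -α) m (Commute.all _ _)
  rw [add_neg_cancel, Ring.choose_zero_ite] at h
  rw [h, Finset.Nat.sum_antidiagonal_eq_sum_range_succ
    (fun i j => Ring.choose α i * Ring.choose (-α) j)]
  simp [gbc_eq_choose]

/-- Signed kernel `(-1)^k C(α,k)`. -/
noncomputable def sg (α : ℂ) (k : ℕ) : ℂ := (-1 : ℂ) ^ k * gbc α k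

lemma sg_apply (α : ℂ) (k : ℕ) : sg α k = (-1 : ℂ) ^ k * gbc α k := rfl

@[simp] lemma sg_zero (α : ℂ) : sg α 0 = 1 := by simp [sg]

lemma sconv (α : ℂ) (m : ℕ) :
    ∑ k ∈ Finset.range (m+1), sg α k * sg (-α) (m-k) = if m = 0 then 1 else 0 := by
  have h1 : ∀ k ∈ Finset.range (m+1),
      sg α k * sg (-α) (m-k) = (-1:ℂ)^m * (gbc α k * gbc (-α) (m-k)) := by
    intro k hk
    have hk' : k ≤ m := by simpa [Nat.lt_succ_iff] using hk
    have h2 : (-1:ℂ)^k * (-1:ℂ)^(m-k) = (-1:ℂ)^m := by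
      rw [← pow_add, Nat.add_sub_cancel' hk']
    calc sg α k * sg (-α) (m-k)
        = ((-1:ℂ)^k * (-1:ℂ)^(m-k)) * (gbc α k * gbc (-α) (m-k)) := by rw [sg, sg]; ring
      _ = (-1:ℂ)^m * (gbc α k * gbc (-α) (m-k)) := by rw [h2]
  rw [Finset.sum_congr rfl h1, ← Finset.mul_sum, conv_gbc]
  rcases eq_or_ne m 0 with h | h <;> simp [h]

lemma sconv' (α : ℂ) (m : ℕ) :
    ∑ k ∈ Finset.range (m+1), sg (-α) k * sg α (m-k) = if m = 0 then 1 else 0 := by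
  have := sconv (-α) m
  rwa [neg_neg] at this

lemma sum_square_diag {M : Type*} [AddCommMonoid M] (f : ℕ → ℕ → M) (N : ℕ)
    (h : ∀ j k, N < j + k → f j k = 0) :
    ∑ j ∈ Finset.range (N+1), ∑ k ∈ Finset.range (N+1), f j k
      = ∑ s ∈ Finset.range (N+1), ∑ j ∈ Finset.range (s+1), f j (s-j) := by
  classical
  have hR : ∀ s : ℕ, ∑ j ∈ Finset.range (s+1), f j (s-j)
      = ∑ p ∈ Finset.HasAntidiagonal.antidiagonal s, f p.1 p.2 :=
    fun s => (Finset.Nat.sum_antidiagonal_eq_sum_range_succ (fun i j => f i j) s).symm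
  have hdisj : (↑(Finset.range (N+1)) : Set ℕ).PairwiseDisjoint
      (Finset.HasAntidiagonal.antidiagonal (A := ℕ)) := by
    intro s _ t _ hst
    refine Finset.disjoint_left.2 fun p hp hq => hst ?_
    rw [← Finset.HasAntidiagonal.mem_antidiagonal.1 hp, Finset.HasAntidiagonal.mem_antidiagonal.1 hq]
  have hbU := (Finset.sum_biUnion (f := fun p : ℕ × ℕ => f p.1 p.2) hdisj).symm
  have hsub : (Finset.range (N+1)).biUnion (Finset.HasAntidiagonal.antidiagonal (A := ℕ))
      ⊆ Finset.range (N+1) ×ˢ Finset.range (N+1) := by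
    intro p hp
    simp only [Finset.mem_biUnion, Finset.mem_range, Finset.HasAntidiagonal.mem_antidiagonal] at hp
    obtain ⟨s, hs, hps⟩ := hp
    simp only [Finset.mem_product, Finset.mem_range]
    omega
  have key := Finset.sum_subset hsub (f := fun p : ℕ × ℕ => f p.1 p.2) ?_
  · rw [← Finset.sum_product', ← key, ← hbU]
    exact (Finset.sum_congr rfl fun s _ => hR s).symm
  · intro p hp hnp
    simp only [Finset.mem_product, Finset.mem_range] at hp
    simp only [Finset.mem_biUnion, Finset.mem_range, Finset.HasAntidiagonal.mem_antidiagonal] at hnp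
    exact h p.1 p.2 (by by_contra hc; exact hnp ⟨p.1 + p.2, by omega, rfl⟩)

lemma tri_comm {M : Type*} [AddCommMonoid M] (f : ℕ → ℕ → M) (m : ℕ) :
    ∑ k ∈ Finset.range (m+1), ∑ j ∈ Finset.range (m+1-k), f k j
      = ∑ j ∈ Finset.range (m+1), ∑ k ∈ Finset.range (m+1-j), f k j := by
  rw [Finset.sum_sigma', Finset.sum_sigma']
  refine Finset.sum_nbij' (fun x => ⟨x.2, x.1⟩) (fun x => ⟨x.2, x.1⟩) ?_ ?_ (fun _ _ => rfl)
    (fun _ _ => rfl) (fun _ _ => rfl) <;>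
  simp only [Finset.mem_range, Sigma.forall, Finset.mem_sigma] <;>
  rintro a b ⟨h₁, h₂⟩ <;> omega

lemma fracPow_neg' (H : Type*) [NormedAddCommGroup H] [Module ℂ H] (α : ℂ) (u : ℤ → H)
    (hsu : ∀ n : ℤ, n < 0 → u n = 0) (n : ℤ) (hn : n < 0) : fracPow H α u n = 0 := by
  simp only [fracPow]
  have h : ∀ k : ℕ, ((-1 : ℂ) ^ k * gbc α k) • u (n - k) = 0 := fun k => by
    rw [hsu _ (by omega), smul_zero]
  simp [h]

lemma fracPow_nat (H : Type*) [NormedAddCommGroup H] [Module ℂ H] (α : ℂ) (u : ℤ → H)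
    (hsu : ∀ n : ℤ, n < 0 → u n = 0) (m : ℕ) :
    fracPow H α u m = ∑ k ∈ Finset.range (m+1), sg α k • u ((m:ℤ) - k) := by
  simp only [fracPow, sg_apply]
  apply tsum_eq_sum
  intro k hk
  simp only [Finset.mem_range, not_lt] at hk
  rw [hsu _ (by omega), smul_zero]

end Helpers

/-- Equivalence of the Riemann–Liouville type equation
`τ(1-τ⁻¹)^α u = F(u) + δ_{-1} x` with the explicit recursion
`u_0 = x`, `u_{n+1} = (-1)^{n+1} C(-α,n+1) u_0 + ∑_{k=0}^n (-1)^{n-k} C(-α,n-k) F(u)_k`. -/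
theorem riemannLiouville_equivalence (H : Type*) [NormedAddCommGroup H]
    [InnerProductSpace ℂ H] [CompleteSpace H]
    (ρ : ℝ) (hρ : 1 < ρ) (α : ℝ) (hα : α ∈ Set.Ioo (0:ℝ) 1) (x : H)
    (F : (ℤ → H) → (ℤ → H)) (u : ℤ → H)
    (hu : Summable fun k : ℤ => ‖u k‖ ^ 2 * ρ ^ (-2 * k))
    (hF : Summable fun k : ℤ => ‖F u k‖ ^ 2 * ρ ^ (-2 * k))
    (hsu : ∀ n : ℤ, n < 0 → u n = 0)
    (hsF : ∀ n : ℤ, n < 0 → F u n = 0) :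
    (∀ n : ℤ, fracPow H (α : ℂ) u (n + 1) = F u n + (if n = -1 then x else 0)) ↔
    (u 0 = x ∧ ∀ n : ℕ,
      u ((n : ℤ) + 1)
        = ((-1 : ℂ) ^ (n + 1) * gbc (-(α : ℂ)) (n + 1)) • u 0
          + ∑ k ∈ Finset.range (n + 1),
              ((-1 : ℂ) ^ (n - k) * gbc (-(α : ℂ)) (n - k)) • F u k) := by
  simp only [← sg_apply]
  constructor
  · intro h
    have h0 : u 0 = x := by
      have h1 := h (-1)
      rw [if_pos rfl, hsF (-1) (by norm_num), zero_add,
        show (-1 + 1 : ℤ) = ((0:ℕ):ℤ) by norm_num, fracPow_nat H _ u hsu 0] at h1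
      simpa using h1
    have E : ∀ j : ℕ, ∑ k ∈ Finset.range (j+2), sg (α:ℂ) k • u ((j:ℤ)+1-k) = F u j := by
      intro j
      have hj := h j
      rw [if_neg (by omega), add_zero,
        show ((j:ℤ) + 1) = ((j+1:ℕ):ℤ) by push_cast; ring, fracPow_nat H _ u hsu (j+1)] at hj
      rw [← hj]
      exact Finset.sum_congr rfl fun k _ => by
        rw [show ((j+1:ℕ):ℤ) - (k:ℤ) = (j:ℤ)+1-k by omega]
    refine ⟨h0, fun m => ?_⟩
    have hreflect : ∑ k ∈ Finset.range (m+1), sg (-(α:ℂ)) (m-k) • F u k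
        = ∑ j ∈ Finset.range (m+1), sg (-(α:ℂ)) j • F u ((m-j : ℕ)) := by
      rw [← Finset.sum_range_reflect (fun j => sg (-(α:ℂ)) j • F u ((m-j : ℕ))) (m+1)]
      refine Finset.sum_congr rfl fun k hk => ?_
      have hk' : k ≤ m := by simpa [Nat.lt_succ_iff] using hk
      show _ = sg (-(α:ℂ)) (m+1-1-k) • F u ((m-(m+1-1-k) : ℕ)); rw [show m+1-1-k = m-k by omega, show m-(m-k) = k by omega]
    have hS2 : ∑ j ∈ Finset.range (m+1), sg (-(α:ℂ)) j • F u ((m-j : ℕ))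
        = ∑ j ∈ Finset.range (m+1), ∑ k ∈ Finset.range (m+2),
            (sg (-(α:ℂ)) j * sg (α:ℂ) k) • u ((m:ℤ)+1-j-k) := by
      refine Finset.sum_congr rfl fun j hj => ?_
      have hj' : j ≤ m := by simpa [Nat.lt_succ_iff] using hj
      rw [← E (m-j)]
      have hext : ∑ k ∈ Finset.range ((m-j)+2), sg (α:ℂ) k • u (((m-j:ℕ):ℤ)+1-k)
          = ∑ k ∈ Finset.range (m+2), sg (α:ℂ) k • u (((m-j:ℕ):ℤ)+1-k) := by
        refine Finset.sum_subset (Finset.range_subset_range.2 (by omega)) fun k hk hnk => ?_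
        simp only [Finset.mem_range, not_lt] at hk hnk
        rw [hsu _ (by omega), smul_zero]
      rw [hext, Finset.smul_sum]
      refine Finset.sum_congr rfl fun k _ => ?_
      rw [smul_smul]
      congr 2
      omega
    have hT : ∑ j ∈ Finset.range (m+2), ∑ k ∈ Finset.range (m+2),
        (sg (-(α:ℂ)) j * sg (α:ℂ) k) • u ((m:ℤ)+1-j-k) = u ((m:ℤ)+1) := by
      rw [sum_square_diag (fun j k => (sg (-(α:ℂ)) j * sg (α:ℂ) k) • u ((m:ℤ)+1-j-k)) (m+1)
        (fun j k hjk => show (sg (-(α:ℂ)) j * sg (α:ℂ) k) • u ((m:ℤ)+1-j-k) = 0 by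
          rw [hsu _ (by omega), smul_zero])]
      have hinner : ∀ s ∈ Finset.range (m+2),
          ∑ j ∈ Finset.range (s+1), (sg (-(α:ℂ)) j * sg (α:ℂ) (s-j)) • u ((m:ℤ)+1-j-((s-j:ℕ):ℤ))
            = (if s = 0 then 1 else 0 : ℂ) • u ((m:ℤ)+1-s) := by
        intro s _
        have h1 : ∀ j ∈ Finset.range (s+1),
            (sg (-(α:ℂ)) j * sg (α:ℂ) (s-j)) • u ((m:ℤ)+1-j-((s-j:ℕ):ℤ))
              = (sg (-(α:ℂ)) j * sg (α:ℂ) (s-j)) • u ((m:ℤ)+1-s) := by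
          intro j hj
          have hj' : j ≤ s := by simpa [Nat.lt_succ_iff] using hj
          rw [show (m:ℤ)+1-(j:ℤ)-((s-j:ℕ):ℤ) = (m:ℤ)+1-(s:ℤ) by omega]
        rw [Finset.sum_congr rfl h1, ← Finset.sum_smul, sconv']
      rw [Finset.sum_congr rfl hinner, Finset.sum_eq_single 0]
      · simp
      · intro s _ hs
        simp [hs]
      · intro hs
        simp at hs
    rw [hreflect, hS2]
    have hlast : ∑ k ∈ Finset.range (m+2),
        (sg (-(α:ℂ)) (m+1) * sg (α:ℂ) k) • u ((m:ℤ)+1-((m+1:ℕ):ℤ)-k)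
          = sg (-(α:ℂ)) (m+1) • u 0 := by
      rw [Finset.sum_eq_single 0]
      · simp
      · intro k _ hk
        rw [hsu _ (by omega), smul_zero]
      · intro hk
        simp at hk
    have hsplit := Finset.sum_range_succ (fun j => ∑ k ∈ Finset.range (m+2),
      (sg (-(α:ℂ)) j * sg (α:ℂ) k) • u ((m:ℤ)+1-j-k)) (m+1)
    rw [hT, hlast] at hsplit
    have hS2val : ∑ j ∈ Finset.range (m+1), ∑ k ∈ Finset.range (m+2),
        (sg (-(α:ℂ)) j * sg (α:ℂ) k) • u ((m:ℤ)+1-j-k)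
          = u ((m:ℤ)+1) - sg (-(α:ℂ)) (m+1) • u 0 := by
      rw [hsplit]; abel
    rw [hS2val]
    abel
  · rintro ⟨h0, hrec⟩ n
    by_cases hn1 : n = -1
    · subst hn1
      rw [if_pos rfl, hsF (-1) (by norm_num), zero_add,
        show (-1 + 1 : ℤ) = ((0:ℕ):ℤ) by norm_num, fracPow_nat H _ u hsu 0]
      simpa using h0
    by_cases hn2 : n < -1
    · rw [fracPow_neg' H _ u hsu _ (by omega), hsF n (by omega), if_neg hn1, add_zero]
    · obtain ⟨m, rfl⟩ : ∃ m : ℕ, n = (m:ℤ) := ⟨n.toNat, by omega⟩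
      rw [if_neg (by omega), add_zero,
        show ((m:ℤ) + 1) = ((m+1:ℕ):ℤ) by push_cast; ring, fracPow_nat H _ u hsu (m+1)]
      have hidx : ∑ k ∈ Finset.range (m+1+1), sg (α:ℂ) k • u (((m+1:ℕ):ℤ) - k)
          = ∑ k ∈ Finset.range (m+2), sg (α:ℂ) k • u ((m:ℤ)+1-k) :=
        Finset.sum_congr rfl fun k _ => by
          rw [show ((m+1:ℕ):ℤ) - (k:ℤ) = (m:ℤ)+1-k by omega]
      rw [hidx, Finset.sum_range_succ, show (m:ℤ)+1-((m+1:ℕ):ℤ) = 0 by push_cast; ring]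
      have hsub : ∀ k ∈ Finset.range (m+1), sg (α:ℂ) k • u ((m:ℤ)+1-k)
          = sg (α:ℂ) k • (sg (-(α:ℂ)) ((m-k)+1) • u 0
              + ∑ j ∈ Finset.range ((m-k)+1), sg (-(α:ℂ)) ((m-k)-j) • F u j) := by
        intro k hk
        have hk' : k ≤ m := by simpa [Nat.lt_succ_iff] using hk
        rw [show (m:ℤ)+1-(k:ℤ) = ((m-k:ℕ):ℤ)+1 by omega, hrec (m-k)]
      rw [Finset.sum_congr rfl hsub]
      simp only [smul_add, Finset.sum_add_distrib]
      have hu0 : ∑ k ∈ Finset.range (m+1), sg (α:ℂ) k • (sg (-(α:ℂ)) ((m-k)+1) • u 0)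
          + sg (α:ℂ) (m+1) • u 0 = 0 := by
        have e1 : ∀ k ∈ Finset.range (m+1), sg (α:ℂ) k • (sg (-(α:ℂ)) ((m-k)+1) • u 0)
            = (sg (α:ℂ) k * sg (-(α:ℂ)) ((m+1)-k)) • u 0 := by
          intro k hk
          have hk' : k ≤ m := by simpa [Nat.lt_succ_iff] using hk
          rw [smul_smul]
          congr 3
          omega
        have e2 : sg (α:ℂ) (m+1) • u 0 = (sg (α:ℂ) (m+1) * sg (-(α:ℂ)) ((m+1)-(m+1))) • u 0 := by
          simp
        rw [Finset.sum_congr rfl e1, ← Finset.sum_smul, e2, ← add_smul,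
          ← Finset.sum_range_succ (fun k => sg (α:ℂ) k * sg (-(α:ℂ)) ((m+1)-k)) (m+1), sconv]
        simp
      have hFm : ∑ k ∈ Finset.range (m+1),
          sg (α:ℂ) k • ∑ j ∈ Finset.range ((m-k)+1), sg (-(α:ℂ)) ((m-k)-j) • F u j = F u m := by
        have e1 : ∀ k ∈ Finset.range (m+1),
            sg (α:ℂ) k • ∑ j ∈ Finset.range ((m-k)+1), sg (-(α:ℂ)) ((m-k)-j) • F u j
              = ∑ j ∈ Finset.range (m+1-k), (sg (α:ℂ) k * sg (-(α:ℂ)) (m-k-j)) • F u j := by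
          intro k hk
          have hk' : k ≤ m := by simpa [Nat.lt_succ_iff] using hk
          rw [Finset.smul_sum]
          refine Finset.sum_congr (by congr 1; omega) fun j _ => ?_
          rw [smul_smul]
        rw [Finset.sum_congr rfl e1,
          tri_comm (fun k j => (sg (α:ℂ) k * sg (-(α:ℂ)) (m-k-j)) • F u j) m]
        have e2 : ∀ j ∈ Finset.range (m+1),
            ∑ k ∈ Finset.range (m+1-j), (sg (α:ℂ) k * sg (-(α:ℂ)) (m-k-j)) • F u j
              = (if m - j = 0 then 1 else 0 : ℂ) • F u j := by
          intro j hj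
          have hj' : j ≤ m := by simpa [Nat.lt_succ_iff] using hj
          have h3 : ∀ k ∈ Finset.range ((m-j)+1),
              (sg (α:ℂ) k * sg (-(α:ℂ)) (m-k-j)) • F u j
                = (sg (α:ℂ) k * sg (-(α:ℂ)) ((m-j)-k)) • F u j := by
            intro k _
            congr 3
            omega
          rw [Finset.sum_congr (show Finset.range (m+1-j) = Finset.range ((m-j)+1) by
            congr 1; omega) h3, ← Finset.sum_smul, sconv]
        rw [Finset.sum_congr rfl e2, Finset.sum_eq_single m]
        · simp
        · intro j hj hjm
          have : m - j ≠ 0 := by simp [Nat.lt_succ_iff] at hj; omega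
          simp [this]
        · intro hm
          simp at hm
      rw [add_right_comm, hu0, zero_add, hFm]
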